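/- Assume ‖μ_1‖ < 1 (the remaining parameters μ_2,…,μ_n are arbitrary). Then for every x ∈ ℝ^d with ‖x‖ > 1000 n √d, the posterior mean satisfies ‖v(x)‖ ≤ 4‖x‖. -/
import Mathlib


open MeasureTheory ProbabilityTheory Filter Topology RealInnerProductSpace

noncomputable section

/-- The standard Gaussian measure `N(0, I_d)` on `ℝ^d`. -/
def stdGaussian (d : ℕ) : Measure (EuclideanSpace ℝ (Fin d)) :=
  (Measure.pi fun _ : Fin d => gaussianReal 0 1).map (EuclideanSpace.equiv (Fin d) ℝ).symm

/-- The Gaussian measure `N(m, I_d)` on `ℝ^d`. -/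
def gaussian {d : ℕ} (m : EuclideanSpace ℝ (Fin d)) : Measure (EuclideanSpace ℝ (Fin d)) :=
  (stdGaussian d).map (fun x => m + x)

/-- The softmax weights `w_i(x)`. -/
def wgt {n d : ℕ} (μ : Fin n → EuclideanSpace ℝ (Fin d)) (i : Fin n)
    (x : EuclideanSpace ℝ (Fin d)) : ℝ :=
  Real.exp (-‖x - μ i‖ ^ 2 / 2) / ∑ j, Real.exp (-‖x - μ j‖ ^ 2 / 2)

/-- The posterior mean `v(x) = ∑ i, w_i(x) μ_i`. -/
def postMean {n d : ℕ} (μ : Fin n → EuclideanSpace ℝ (Fin d))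
    (x : EuclideanSpace ℝ (Fin d)) : EuclideanSpace ℝ (Fin d) :=
  ∑ i, wgt μ i x • μ i

/-- The population score matching loss `L(μ₁,…,μₙ) = E_{x ∼ N(μ*, I_d)} ‖v(x) − μ*‖²`. -/
def loss {n d : ℕ} (μstar : EuclideanSpace ℝ (Fin d))
    (μ : Fin n → EuclideanSpace ℝ (Fin d)) : ℝ :=
  ∫ x, ‖postMean μ x - μstar‖ ^ 2 ∂(gaussian μstar)

/-- The gradient `∇_{μ_i} L` of the loss with respect to the `i`-th parameter. -/
def gradLoss {n d : ℕ} (μstar : EuclideanSpace ℝ (Fin d))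
    (μ : Fin n → EuclideanSpace ℝ (Fin d)) (i : Fin n) : EuclideanSpace ℝ (Fin d) :=
  gradient (fun y => loss μstar (Function.update μ i y)) (μ i)

/-- Gradient descent iterates `μ_i^{(τ+1)} = μ_i^{(τ)} − η ∇_{μ_i} L(μ^{(τ)})`. -/
def gdIter {n d : ℕ} (μstar : EuclideanSpace ℝ (Fin d)) (η : ℝ)
    (μ0 : Fin n → EuclideanSpace ℝ (Fin d)) : ℕ → Fin n → EuclideanSpace ℝ (Fin d)
  | 0 => μ0
  | τ + 1 => fun i => gdIter μstar η μ0 τ i - η • gradLoss μstar (gdIter μstar η μ0 τ) i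

set_option maxHeartbeats 1000000 in
/-- the posterior mean is not too large far from the origin. -/
theorem postMean_not_big (n d : ℕ) (hn : 1 ≤ n) (hd : 1 ≤ d)
    (μ : Fin n → EuclideanSpace ℝ (Fin d))
    (h1 : ‖μ ⟨0, by omega⟩‖ < 1) :
    ∀ x : EuclideanSpace ℝ (Fin d), ‖x‖ > 1000 * (n:ℝ) * Real.sqrt d →
      ‖postMean μ x‖ ≤ 4 * ‖x‖ := by
  intro x hx
  have hd1 : (1:ℝ) ≤ Real.sqrt d := by
    rw [show (1:ℝ) = Real.sqrt 1 by simp]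
    exact Real.sqrt_le_sqrt (by exact_mod_cast hd)
  have hn1 : (1:ℝ) ≤ n := by exact_mod_cast hn
  have hRn : 1000 * (n:ℝ) ≤ ‖x‖ := by nlinarith
  have hR : (1000:ℝ) < ‖x‖ := by nlinarith
  set R := ‖x‖ with hRdef
  set i0 : Fin n := ⟨0, by omega⟩ with hi0
  set S := ∑ j, Real.exp (-‖x - μ j‖ ^ 2 / 2) with hSdef
  have hS0 : 0 < S :=
    Finset.sum_pos (fun j _ => Real.exp_pos _) ⟨i0, Finset.mem_univ i0⟩
  have hwnn : ∀ i, 0 ≤ wgt μ i x := fun i => div_nonneg (Real.exp_pos _).le hS0.le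
  have hwsum : ∑ i, wgt μ i x = 1 := by
    unfold wgt
    rw [← Finset.sum_div, ← hSdef, div_self hS0.ne']
  have he0S : Real.exp (-‖x - μ i0‖ ^ 2 / 2) ≤ S := by
    rw [hSdef]
    exact Finset.single_le_sum (f := fun j => Real.exp (-‖x - μ j‖ ^ 2 / 2))
      (fun j _ => (Real.exp_pos _).le) (Finset.mem_univ i0)
  have key : ∀ i : Fin n, wgt μ i x * ‖μ i‖ ≤ 3 * R * wgt μ i x + R / n := by
    intro i
    by_cases hcase : ‖μ i‖ ≤ 3 * R
    · have h2 : wgt μ i x * ‖μ i‖ ≤ wgt μ i x * (3 * R) :=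
        mul_le_mul_of_nonneg_left hcase (hwnn i)
      have hpos : (0:ℝ) ≤ R / n := by positivity
      nlinarith [hwnn i]
    · push_neg at hcase
      set t := ‖μ i‖ with htdef
      have ht : 3 * R < t := hcase
      have htpos : 0 < t := by linarith
      have hle : wgt μ i x ≤
          Real.exp (-‖x - μ i‖ ^ 2 / 2) / Real.exp (-‖x - μ i0‖ ^ 2 / 2) := by
        unfold wgt
        rw [← hSdef]
        gcongr
      rw [div_eq_mul_inv, ← Real.exp_neg, ← Real.exp_add] at hle
      have ha : ‖x - μ i0‖ ≤ R + 1 := by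
        have := norm_sub_le x (μ i0)
        have h1' : ‖μ i0‖ < 1 := h1
        linarith
      have hb : t - R ≤ ‖x - μ i‖ := by
        have := norm_sub_norm_le (μ i) x
        rw [norm_sub_rev (μ i) x] at this
        linarith
      have hE : -‖x - μ i‖ ^ 2 / 2 + -(-‖x - μ i0‖ ^ 2 / 2) ≤ -t := by
        have ha2 : ‖x - μ i0‖ ^ 2 ≤ (R + 1) ^ 2 := by
          nlinarith [norm_nonneg (x - μ i0)]
        have hb2 : (t - R) ^ 2 ≤ ‖x - μ i‖ ^ 2 := by
          nlinarith [norm_nonneg (x - μ i)]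
        nlinarith
      have hexp : Real.exp (-‖x - μ i‖ ^ 2 / 2 + -(-‖x - μ i0‖ ^ 2 / 2)) ≤
          Real.exp (-t) := Real.exp_le_exp.mpr hE
      have hexpt : Real.exp (-t) * t ≤ 1 := by
        rw [Real.exp_neg]
        rw [inv_mul_le_iff₀ (Real.exp_pos t), mul_one]
        linarith [Real.add_one_le_exp t]
      have h3 : wgt μ i x * t ≤ 1 := by
        calc wgt μ i x * t ≤ Real.exp (-t) * t := by
              exact mul_le_mul_of_nonneg_right (hle.trans hexp) htpos.le
          _ ≤ 1 := hexpt
      have hRn' : (1:ℝ) ≤ R / n := by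
        rw [le_div_iff₀ (by linarith : (0:ℝ) < n)]
        nlinarith
      have h4 : 0 ≤ 3 * R * wgt μ i x := by
        have := hwnn i
        nlinarith
      linarith
  calc ‖postMean μ x‖ ≤ ∑ i, ‖wgt μ i x • μ i‖ := norm_sum_le _ _
    _ = ∑ i, wgt μ i x * ‖μ i‖ := by
        refine Finset.sum_congr rfl fun i _ => ?_
        rw [norm_smul, Real.norm_eq_abs, abs_of_nonneg (hwnn i)]
    _ ≤ ∑ i : Fin n, (3 * R * wgt μ i x + R / n) := Finset.sum_le_sum fun i _ => key i
    _ = 3 * R * (∑ i, wgt μ i x) + n * (R / n) := by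
        rw [Finset.sum_add_distrib, ← Finset.mul_sum, Finset.sum_const, Finset.card_univ,
          Fintype.card_fin, nsmul_eq_mul]
    _ = 4 * R := by
        rw [hwsum, mul_one, mul_div_cancel₀ R (by positivity : (n:ℝ) ≠ 0)]
        ring

end
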